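/- arXiv:1311.2232 — 5 statements merged into one kernel-verified Lean document; each statement's English description precedes it below -/
import Mathlib

section
/- Let Γ be a finite simplicial graph with vertex set V. Let a, b ∈ V be distinct and non-adjacent, let K be a connected component of Γ∖st(a), and let L be a connected component of Γ∖st(b). If b ∉ K, then either K ∩ L = ∅ or K ⊆ L (as sets of vertices). -/
open SimpleGraph

/-- The star of a vertex: the vertex together with its neighbours. -/
def Gstar {V : Type} (Γ : SimpleGraph V) (a : V) : Set V := insert a (Γ.neighborSet a)

/-- The set of vertices whose star is the whole vertex set. -/
def Zset {V : Type} (Γ : SimpleGraph V) : Set V := {v | Gstar Γ v = Set.univ}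

/-- `K` is (the vertex set of) a connected component of the full subgraph of `Γ`
induced on the vertex set `S`. -/
def IsCompOf {V : Type} (Γ : SimpleGraph V) (S K : Set V) : Prop :=
  ∃ c : (Γ.induce S).ConnectedComponent, K = Subtype.val '' c.supp

/-- The defining relators of the right-angled Artin group of `Γ`. -/
def raagRels {V : Type} (Γ : SimpleGraph V) : Set (FreeGroup V) :=
  {r | ∃ a b : V, Γ.Adj a b ∧
    r = FreeGroup.of a * FreeGroup.of b * (FreeGroup.of a)⁻¹ * (FreeGroup.of b)⁻¹}

/-- The right-angled Artin group `A(Γ)`. -/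
abbrev RAAG {V : Type} (Γ : SimpleGraph V) : Type := PresentedGroup (raagRels Γ)

/-- The generator of `A(Γ)` corresponding to a vertex `v`. -/
def raagGen {V : Type} (Γ : SimpleGraph V) (v : V) : RAAG Γ := PresentedGroup.of v

/-- The pure symmetric automorphism group: automorphisms sending each standard
generator to a conjugate of itself. -/
def PSA {V : Type} (Γ : SimpleGraph V) : Subgroup (MulAut (RAAG Γ)) where
  carrier := {φ | ∀ v : V, IsConj (raagGen Γ v) (φ (raagGen Γ v))}
  one_mem' := fun v => IsConj.refl _
  mul_mem' := by
    intro φ ψ hφ hψ v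
    have h2 : IsConj (φ (raagGen Γ v)) (φ (ψ (raagGen Γ v))) :=
      φ.toMonoidHom.map_isConj (hψ v)
    simpa [MulAut.mul_apply] using (hφ v).trans h2
  inv_mem' := by
    intro φ hφ v
    have h := (φ⁻¹ : MulAut (RAAG _)).toMonoidHom.map_isConj (hφ v)
    simp only [MulEquiv.toMonoidHom_eq_coe, MonoidHom.coe_coe, MulAut.inv_def,
      MulEquiv.symm_apply_apply] at h
    exact h.symm

/-- `φ` is the partial conjugation `π_{a,K}`. -/
def IsPartialConj {V : Type} (Γ : SimpleGraph V) (a : V) (K : Set V)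
    (φ : MulAut (RAAG Γ)) : Prop :=
  IsCompOf Γ (Gstar Γ a)ᶜ K ∧
  (∀ v ∈ K, φ (raagGen Γ v) = (raagGen Γ a)⁻¹ * raagGen Γ v * raagGen Γ a) ∧
  (∀ v ∉ K, φ (raagGen Γ v) = raagGen Γ v)

/-- Combinatorial data (acting letter, domain) of the partial conjugations. -/
def PCSet {V : Type} (Γ : SimpleGraph V) : Set (V × Set V) :=
  {p | IsCompOf Γ (Gstar Γ p.1)ᶜ p.2}

/-- A non-trivial admissible partition (for p-sets). -/
def IsAdmissiblePartition {V : Type} (Q₁ Q₂ : Set (V × Set V)) : Prop :=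
  Disjoint Q₁ Q₂ ∧ Q₁.Nonempty ∧ Q₂.Nonempty ∧
    ∀ p ∈ Q₁, ∀ q ∈ Q₂, p.1 ∈ q.2 ∧ q.1 ∈ p.2

/-- A p-set of partial conjugations. -/
def IsPSet {V : Type} (Γ : SimpleGraph V) (Q : Set (V × Set V)) : Prop :=
  Q ⊆ PCSet Γ ∧
  (∀ a : V, {p ∈ Q | p.1 = a}.Subsingleton) ∧
  ∃ Q₁ Q₂ : Set (V × Set V), Q₁ ∪ Q₂ = Q ∧ IsAdmissiblePartition Q₁ Q₂

/-- A non-trivial admissible partition (for δ-p-sets). -/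
def IsDeltaAdmissiblePartition {V : Type} (Q₁ Q₂ : Set (V × Set V)) : Prop :=
  Disjoint Q₁ Q₂ ∧ Q₁.Nonempty ∧ Q₂.Nonempty ∧
    ∀ p ∈ Q₁, ∀ q ∈ Q₂, p.1 ∈ q.2 ∨ q.1 ∈ p.2 ∨ p.2 = q.2

/-- A δ-p-set of partial conjugations. -/
def IsDeltaPSet {V : Type} (Γ : SimpleGraph V) (Q : Set (V × Set V)) : Prop :=
  Q ⊆ PCSet Γ ∧
  (∀ a : V, a ∉ Zset Γ →
    ({p ∈ Q | p.1 = a}.ncard = 0 ∨ {p ∈ Q | p.1 = a}.ncard = 2)) ∧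
  ∃ Q₁ Q₂ : Set (V × Set V), Q₁ ∪ Q₂ = Q ∧ IsDeltaAdmissiblePartition Q₁ Q₂

/-- `Γ` has a separating intersection of links. -/
def HasSIL {V : Type} (Γ : SimpleGraph V) : Prop :=
  ∃ a b : V, a ≠ b ∧ ¬Γ.Adj a b ∧
    ∃ M : Set V, IsCompOf Γ (Γ.neighborSet a ∩ Γ.neighborSet b)ᶜ M ∧ a ∉ M ∧ b ∉ M

/-- The full subgraph spanned by `U` is dominating. -/
def Dominating {V : Type} (Γ : SimpleGraph V) (U : Set V) : Prop :=
  ∀ v : V, v ∈ U ∨ ∃ u ∈ U, Γ.Adj v u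

/-- The full subgraph spanned by `U` is disconnected or non-dominating. -/
def Missing {V : Type} (Γ : SimpleGraph V) (U : Set V) : Prop :=
  ¬(Γ.induce U).Connected ∨ ¬Dominating Γ U

/-! Since `b ∉ st(a)`, a neighbour of `b` in `K` would pull `b` into `K`, so `b ∉ K` forces `K` to
avoid `st(b)`. Being connected inside `Γ ∖ st(b)`, `K` then lies in a single component of it, which
is `L` as soon as `K` meets `L`. -/

lemma mem_Gstar_iff {V : Type} {Γ : SimpleGraph V} {a v : V} :
    v ∈ Gstar Γ a ↔ v = a ∨ Γ.Adj a v :=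
  Iff.rfl

namespace IsCompOf

variable {V : Type} {G : SimpleGraph V} {S T K L : Set V}

lemma mem_of_adj (hK : IsCompOf G S K) {u v : V} (hu : u ∈ K) (hv : v ∈ S) (huv : G.Adj u v) :
    v ∈ K := by
  obtain ⟨c, rfl⟩ := hK
  obtain ⟨u, hu, rfl⟩ := hu
  exact ⟨⟨v, hv⟩, c.mem_supp_of_adj_mem_supp hu huv, rfl⟩

lemma reachable_induce_of_subset (hK : IsCompOf G S K) (hKT : K ⊆ T) {x y : V} (hx : x ∈ K)
    (hy : y ∈ K) : (G.induce T).Reachable ⟨x, hKT hx⟩ ⟨y, hKT hy⟩ := by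
  obtain ⟨c, rfl⟩ := hK
  obtain ⟨x, hx, rfl⟩ := hx
  obtain ⟨y, hy, rfl⟩ := hy
  let f : c.toSimpleGraph →g G.induce T :=
    { toFun := fun u => ⟨u.1.1, hKT ⟨u.1, u.2, rfl⟩⟩
      map_rel' := id }
  exact (c.reachable_toSimpleGraph hx hy).map f

lemma subset_of_subset_of_inter_nonempty (hK : IsCompOf G S K) (hL : IsCompOf G T L)
    (hKT : K ⊆ T) (hKL : (K ∩ L).Nonempty) : K ⊆ L := by
  obtain ⟨d, rfl⟩ := hL
  obtain ⟨_, hxK, x, hx, rfl⟩ := hKL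
  intro y hy
  refine ⟨⟨y, hKT hy⟩, ?_, rfl⟩
  rw [ConnectedComponent.mem_supp_iff] at hx ⊢
  rw [← hx]
  exact (ConnectedComponent.sound (hK.reachable_induce_of_subset hKT hxK hy)).symm

lemma inter_eq_empty_or_subset (hK : IsCompOf G S K) (hL : IsCompOf G T L) (hKT : K ⊆ T) :
    K ∩ L = ∅ ∨ K ⊆ L :=
  (Set.eq_empty_or_nonempty _).imp_right (hK.subset_of_subset_of_inter_nonempty hL hKT)

end IsCompOf

theorem comp_inter_empty_or_subset_general {V : Type} (Γ : SimpleGraph V)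
    (a b : V) (hab : a ≠ b) (hadj : ¬Γ.Adj a b) (K L : Set V)
    (hK : IsCompOf Γ (Gstar Γ a)ᶜ K) (hL : IsCompOf Γ (Gstar Γ b)ᶜ L)
    (hbK : b ∉ K) : K ∩ L = ∅ ∨ K ⊆ L := by
  have hb : b ∉ Gstar Γ a := by
    rintro (h | h)
    exacts [hab h.symm, hadj h]
  refine hK.inter_eq_empty_or_subset hL fun v hv hvb => ?_
  rcases mem_Gstar_iff.1 hvb with rfl | hbv
  · exact hbK hv
  · exact hbK (hK.mem_of_adj hv hb hbv.symm)

/-- Lemma 3.1. If `K` is a component of `Γ∖st(a)`, `L` a component of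
`Γ∖st(b)`, `a,b` distinct and non-adjacent, and `b ∉ K`, then `K ∩ L = ∅` or `K ⊆ L`. -/
theorem comp_inter_empty_or_subset {V : Type} [Fintype V] (Γ : SimpleGraph V)
    (a b : V) (hab : a ≠ b) (hadj : ¬Γ.Adj a b) (K L : Set V)
    (hK : IsCompOf Γ (Gstar Γ a)ᶜ K) (hL : IsCompOf Γ (Gstar Γ b)ᶜ L)
    (hbK : b ∉ K) : K ∩ L = ∅ ∨ K ⊆ L :=
  comp_inter_empty_or_subset_general Γ a b hab hadj K L hK hL hbK
end

section
/- Let Γ be a finite simplicial graph with vertex set V such that Z = {v ∈ V : st(v) = V} is non-empty. For every pair of partial conjugations (π_{a,K}, π_{b,L}), exactly one of the following six cases holds: (1) d(a,b) ≤ 1 (i.e., a = b or a and b are adjacent); (2) d(a,b) = 2, a ∈ L, and b ∈ K; (3) d(a,b) = 2, K ∩ L = ∅, and exactly one of a ∈ L or b ∈ K holds; (4) d(a,b) = 2, and either {a} ∪ K ⊊ L or {b} ∪ L ⊊ K; (5) d(a,b) = 2, and ({a} ∪ K) ∩ ({b} ∪ L) = ∅; (6) d(a,b) = 2 and K = L.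 -/
open SimpleGraph

/-!
Once `d(a,b) = 2`, the case is decided by three facts: whether `a ∈ L`, whether `b ∈ K`, and
whether `K` and `L` meet. The graph-theoretic input is that a component `K` of `Γ ∖ st(a)` with
`b ∉ K` avoids `st(b)`; being connected, it then lies in a single component of `Γ ∖ st(b)`, so
`K ⊆ L` as soon as `K` meets `L`. If moreover `a ∈ L`, a neighbour of `a` in `L` lies outside
`{a} ∪ K`, which makes `{a} ∪ K ⊊ L`.
-/

theorem Set.insert_inter_insert_eq_empty_iff {α : Type*} {a b : α} {s t : Set α} (hab : a ≠ b) :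
    insert a s ∩ insert b t = ∅ ↔ a ∉ t ∧ b ∉ s ∧ ¬(s ∩ t).Nonempty := by
  simp only [Set.eq_empty_iff_forall_notMem, Set.not_nonempty_iff_eq_empty, Set.mem_inter_iff,
    Set.mem_insert_iff]
  constructor
  · intro h
    exact ⟨fun hat => h a ⟨Or.inl rfl, Or.inr hat⟩, fun hbs => h b ⟨Or.inr hbs, Or.inl rfl⟩,
      fun x hx => h x ⟨Or.inr hx.1, Or.inr hx.2⟩⟩
  · rintro ⟨hat, hbs, hst⟩ x ⟨rfl | hxs, rfl | hxt⟩
    exacts [hab rfl, hat hxt, hbs hxs, hst x ⟨hxs, hxt⟩]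

/-- The last five conditions partition the eight truth assignments of `α`, `β`, `γ`. -/
theorem existsUnique_fin_six_cases {P D Q₁ Q₂ Q₃ Q₄ Q₅ α β γ : Prop} (hD : D ↔ ¬P)
    (h₁ : D → (Q₁ ↔ α ∧ β)) (h₂ : D → (Q₂ ↔ ¬γ ∧ (α ∧ ¬β ∨ β ∧ ¬α)))
    (h₃ : D → (Q₃ ↔ α ∧ ¬β ∧ γ ∨ β ∧ ¬α ∧ γ)) (h₄ : D → (Q₄ ↔ ¬α ∧ ¬β ∧ ¬γ))
    (h₅ : D → (Q₅ ↔ ¬α ∧ ¬β ∧ γ)) :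
    ∃! i : Fin 6, ![P, D ∧ Q₁, D ∧ Q₂, D ∧ Q₃, D ∧ Q₄, D ∧ Q₅] i := by
  simp only [ExistsUnique, Fin.exists_fin_succ, Fin.forall_fin_succ, Fin.exists_fin_zero]
  by_cases hP : P
  · have hD' : ¬D := by rwa [hD, not_not]
    simp [hD', hP]
  · have hD' : D := hD.2 hP
    simp only [hD', hP, true_and, h₁ hD', h₂ hD', h₃ hD', h₄ hD', h₅ hD']
    by_cases α <;> by_cases β <;> by_cases γ <;> simp [*]

section Gstar

variable {V : Type} {Γ : SimpleGraph V} {a b : V}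

theorem mem_Gstar {v : V} : v ∈ Gstar Γ a ↔ v = a ∨ Γ.Adj a v := Iff.rfl

theorem notMem_Gstar_iff : b ∉ Gstar Γ a ↔ a ≠ b ∧ ¬Γ.Adj a b := by
  rw [mem_Gstar, not_or, ne_comm]

theorem notMem_Gstar_comm : a ∉ Gstar Γ b ↔ b ∉ Gstar Γ a := by
  rw [notMem_Gstar_iff, notMem_Gstar_iff, ne_comm, Γ.adj_comm]

end Gstar

namespace IsCompOf

variable {V : Type} {Γ : SimpleGraph V} {S U K L : Set V} {a b : V}

theorem subset (hK : IsCompOf Γ S K) : K ⊆ S := by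
  obtain ⟨c, rfl⟩ := hK
  rintro _ ⟨v, -, rfl⟩
  exact v.2

theorem nonempty (hK : IsCompOf Γ S K) : K.Nonempty := by
  obtain ⟨c, rfl⟩ := hK
  exact ⟨_, c.out, c.out_eq, rfl⟩

theorem mem_of_adj_s4 (hK : IsCompOf Γ S K) {v w : V} (hv : v ∈ K) (hw : w ∈ S)
    (hvw : Γ.Adj v w) : w ∈ K := by
  obtain ⟨c, rfl⟩ := hK
  obtain ⟨v, hvc, rfl⟩ := hv
  exact ⟨⟨w, hw⟩, (c.mem_supp_congr_adj (induce_adj.2 hvw)).1 hvc, rfl⟩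

theorem connected (hK : IsCompOf Γ S K) : (Γ.induce K).Connected := by
  obtain ⟨c, rfl⟩ := hK
  let f : c.toSimpleGraph →g Γ.induce (Subtype.val '' c.supp) :=
    induceHom (Embedding.induce S).toHom fun v hv => ⟨v, hv, rfl⟩
  refine c.connected_toSimpleGraph.map f ?_
  rintro ⟨_, v, hv, rfl⟩
  exact ⟨⟨v, hv⟩, rfl⟩

theorem subset_of_preconnected (hK : IsCompOf Γ S K) (hU : (Γ.induce U).Preconnected)
    (hUS : U ⊆ S) (hKU : (K ∩ U).Nonempty) : U ⊆ K := by
  obtain ⟨c, rfl⟩ := hK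
  obtain ⟨_, ⟨m, hmc, rfl⟩, hmU⟩ := hKU
  intro u hu
  have hum : (Γ.induce S).Reachable ⟨u, hUS hu⟩ m :=
    (hU ⟨u, hu⟩ ⟨m, hmU⟩).map (Γ.induceHomOfLE hUS).toHom
  exact ⟨⟨u, hUS hu⟩, (c.mem_supp_iff _).2 ((ConnectedComponent.sound hum).trans hmc), rfl⟩

theorem exists_adj_of_mem (hK : IsCompOf Γ S K) {x y : V} (hx : x ∈ K) (hy : y ∈ K)
    (hxy : x ≠ y) : ∃ w ∈ K, Γ.Adj x w := by
  have : Nontrivial K := ⟨⟨⟨x, hx⟩, ⟨y, hy⟩, fun h => hxy (congrArg Subtype.val h)⟩⟩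
  obtain ⟨w, hw⟩ := hK.connected.preconnected.exists_adj_of_nontrivial ⟨x, hx⟩
  exact ⟨w, w.2, hw⟩

theorem subset_compl_Gstar (hK : IsCompOf Γ S K) (hb : b ∈ S) (hbK : b ∉ K) :
    K ⊆ (Gstar Γ b)ᶜ := by
  rintro v hv (rfl | hbv)
  · exact hbK hv
  · exact hbK (hK.mem_of_adj_s4 hv hb hbv.symm)

theorem notMem_of_compl_Gstar (hK : IsCompOf Γ (Gstar Γ a)ᶜ K) : a ∉ K :=
  fun haK => hK.subset haK (Set.mem_insert a _)

theorem subset_of_inter_nonempty (hK : IsCompOf Γ (Gstar Γ a)ᶜ K)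
    (hL : IsCompOf Γ (Gstar Γ b)ᶜ L) (hb : b ∉ Gstar Γ a) (hbK : b ∉ K)
    (hKL : (K ∩ L).Nonempty) : K ⊆ L :=
  hL.subset_of_preconnected hK.connected.preconnected (hK.subset_compl_Gstar hb hbK)
    (Set.inter_comm K L ▸ hKL)

theorem insert_ssubset_of_subset (hK : IsCompOf Γ (Gstar Γ a)ᶜ K) (hL : IsCompOf Γ S L)
    (haL : a ∈ L) (hKL : K ⊆ L) : insert a K ⊂ L := by
  refine (Set.insert_subset haL hKL).ssubset_of_not_subset fun hLK => ?_
  obtain ⟨v, hv⟩ := hK.nonempty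
  obtain ⟨w, hwL, haw⟩ :=
    hL.exists_adj_of_mem haL (hKL hv) (ne_of_mem_of_not_mem hv hK.notMem_of_compl_Gstar).symm
  rcases hLK hwL with rfl | hwK
  · exact haw.ne rfl
  · exact hK.subset hwK (Or.inr haw)

theorem insert_ssubset_iff (hK : IsCompOf Γ (Gstar Γ a)ᶜ K) (hL : IsCompOf Γ (Gstar Γ b)ᶜ L) :
    insert a K ⊂ L ↔ a ∈ L ∧ b ∉ K ∧ (K ∩ L).Nonempty := by
  constructor
  · intro h
    have hKL : K ⊆ L := (Set.subset_insert a K).trans h.subset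
    exact ⟨h.subset (Set.mem_insert a K), fun hbK => hL.notMem_of_compl_Gstar (hKL hbK),
      by rw [Set.inter_eq_left.2 hKL]; exact hK.nonempty⟩
  · rintro ⟨haL, hbK, hKL⟩
    have hb : b ∉ Gstar Γ a := notMem_Gstar_comm.1 (hL.subset haL)
    exact hK.insert_ssubset_of_subset hL haL (hK.subset_of_inter_nonempty hL hb hbK hKL)

theorem eq_iff (hK : IsCompOf Γ (Gstar Γ a)ᶜ K) (hL : IsCompOf Γ (Gstar Γ b)ᶜ L)
    (hb : b ∉ Gstar Γ a) : K = L ↔ a ∉ L ∧ b ∉ K ∧ (K ∩ L).Nonempty := by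
  constructor
  · rintro rfl
    exact ⟨hK.notMem_of_compl_Gstar, hL.notMem_of_compl_Gstar, by simpa using hK.nonempty⟩
  · rintro ⟨haL, hbK, hKL⟩
    exact (hK.subset_of_inter_nonempty hL hb hbK hKL).antisymm
      (hL.subset_of_inter_nonempty hK (notMem_Gstar_comm.1 hb) haL (Set.inter_comm K L ▸ hKL))

end IsCompOf

theorem pc_pair_six_cases_general {V : Type} (Γ : SimpleGraph V)
    (a b : V) (K L : Set V)
    (hK : IsCompOf Γ (Gstar Γ a)ᶜ K) (hL : IsCompOf Γ (Gstar Γ b)ᶜ L) :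
    ∃! i : Fin 6,
      ![ a = b ∨ Γ.Adj a b,
         (a ≠ b ∧ ¬Γ.Adj a b) ∧ a ∈ L ∧ b ∈ K,
         (a ≠ b ∧ ¬Γ.Adj a b) ∧ K ∩ L = ∅ ∧ Xor' (a ∈ L) (b ∈ K),
         (a ≠ b ∧ ¬Γ.Adj a b) ∧ (insert a K ⊂ L ∨ insert b L ⊂ K),
         (a ≠ b ∧ ¬Γ.Adj a b) ∧ (insert a K) ∩ (insert b L) = ∅,
         (a ≠ b ∧ ¬Γ.Adj a b) ∧ K = L ] i := by
  refine existsUnique_fin_six_cases (α := a ∈ L) (β := b ∈ K) (γ := (K ∩ L).Nonempty) not_or.symm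
    (fun _ => Iff.rfl) (fun _ => and_congr_left' Set.not_nonempty_iff_eq_empty.symm)
    (fun _ => ?_) (fun hab => Set.insert_inter_insert_eq_empty_iff hab.1)
    (fun hab => hK.eq_iff hL (notMem_Gstar_iff.2 hab))
  rw [hK.insert_ssubset_iff hL, hL.insert_ssubset_iff hK, Set.inter_comm L K]

/-- Lemma 3.2, trichotomy part. For any pair of partial conjugations
`(π_{a,K}, π_{b,L})`, exactly one of the six listed cases holds. -/
theorem pc_pair_six_cases {V : Type} [Fintype V] (Γ : SimpleGraph V)
    (hZ : (Zset Γ).Nonempty) (a b : V) (K L : Set V)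
    (hK : IsCompOf Γ (Gstar Γ a)ᶜ K) (hL : IsCompOf Γ (Gstar Γ b)ᶜ L) :
    ∃! i : Fin 6,
      ![ a = b ∨ Γ.Adj a b,
         (a ≠ b ∧ ¬Γ.Adj a b) ∧ a ∈ L ∧ b ∈ K,
         (a ≠ b ∧ ¬Γ.Adj a b) ∧ K ∩ L = ∅ ∧ Xor' (a ∈ L) (b ∈ K),
         (a ≠ b ∧ ¬Γ.Adj a b) ∧ (insert a K ⊂ L ∨ insert b L ⊂ K),
         (a ≠ b ∧ ¬Γ.Adj a b) ∧ (insert a K) ∩ (insert b L) = ∅,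
         (a ≠ b ∧ ¬Γ.Adj a b) ∧ K = L ] i :=
  pc_pair_six_cases_general Γ a b K L hK hL
end

section
/- Let Γ be a finite simplicial graph with vertex set V such that Z = {v ∈ V : st(v) = V} is non-empty, and let A = A(Γ). Let a ∈ V ∖ Z and let π_{b,L} be a partial conjugation. Then the inner automorphism ι_a (given by w ↦ a⁻¹wa for all w ∈ A) commutes with π_{b,L} in Aut(A) if and only if a ∉ L. -/
open SimpleGraph

/-!
Conjugation by `g` commutes with an automorphism `φ` as soon as `φ` fixes `g`, and only if
`g` commutes with `φ g`. If `a ∉ L`, then `π_{b,L}` fixes `a`. If `a ∈ L`, then `a ∉ st(b)`, and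
`a` would have to commute with `π_{b,L}(a) = b⁻¹ab`; this fails already in the quotient of
`A(Γ)` that kills every generator other than `a` and `b`, which is free of rank two.
-/

namespace MulAut

variable {G : Type*} [Group G]

theorem commute_conj_of_map_eq {φ : MulAut G} {g : G} (h : φ g = g) :
    Commute (conj g) φ := by
  ext x
  simp [h]

theorem commute_map_self_of_commute_conj {φ : MulAut G} {g : G}
    (h : Commute (conj g) φ) : Commute g (φ g) := by
  have hg := congrArg (fun e : MulAut G => e g) h.eq
  simp only [mul_apply, conj_apply, mul_inv_cancel_right] at hg
  exact (eq_mul_inv_iff_mul_eq.mp hg.symm).symm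

end MulAut

theorem IsCompOf.subset_s7 {V : Type} {Γ : SimpleGraph V} {S K : Set V} (h : IsCompOf Γ S K) :
    K ⊆ S := by
  obtain ⟨c, rfl⟩ := h
  rintro _ ⟨v, -, rfl⟩
  exact v.2

theorem ne_and_not_adj_of_notMem_Gstar {V : Type} {Γ : SimpleGraph V} {a b : V}
    (h : a ∉ Gstar Γ b) : a ≠ b ∧ ¬Γ.Adj a b := by
  simpa [Gstar, Γ.adj_comm, not_or] using h

def raagLift {V : Type} (Γ : SimpleGraph V) {H : Type*} [Group H] (f : V → H)
    (hf : ∀ u w, Γ.Adj u w → Commute (f u) (f w)) : RAAG Γ →* H :=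
  PresentedGroup.toGroup (f := f) <| by
    rintro _ ⟨u, w, huw, rfl⟩
    simp [(hf u w huw).eq]

@[simp]
theorem raagLift_raagGen {V : Type} (Γ : SimpleGraph V) {H : Type*} [Group H] (f : V → H)
    (hf : ∀ u w, Γ.Adj u w → Commute (f u) (f w)) (v : V) :
    raagLift Γ f hf (raagGen Γ v) = f v :=
  PresentedGroup.toGroup.of _

theorem not_commute_raagGen_conj {V : Type} (Γ : SimpleGraph V) {a b : V}
    (hne : a ≠ b) (hadj : ¬Γ.Adj a b) :
    ¬Commute (raagGen Γ a) ((raagGen Γ b)⁻¹ * raagGen Γ a * raagGen Γ b) := by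
  classical
  let f : V → FreeGroup Bool :=
    fun v => if v = a then .of true else if v = b then .of false else 1
  have hf : ∀ u w, Γ.Adj u w → Commute (f u) (f w) := by
    intro u w huw
    simp only [f]
    split_ifs <;> subst_vars <;> simp_all [Γ.adj_comm]
  intro hcomm
  have himage := (hcomm.map (raagLift Γ f hf)).eq
  simp only [map_mul, map_inv, raagLift_raagGen, f, hne.symm, ↓reduceIte] at himage
  exact absurd himage (by decide)

theorem inner_commute_pc_iff_general {V : Type} (Γ : SimpleGraph V)
    (a : V) (b : V) (L : Set V)
    (ψ : MulAut (RAAG Γ)) (hψ : IsPartialConj Γ b L ψ) :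
    Commute (MulAut.conj (raagGen Γ a)⁻¹) ψ ↔ a ∉ L := by
  obtain ⟨hL, hin, hout⟩ := hψ
  constructor
  · intro hcomm haL
    obtain ⟨hne, hadj⟩ := ne_and_not_adj_of_notMem_Gstar (hL.subset_s7 haL)
    have hcomm_a := MulAut.commute_map_self_of_commute_conj hcomm
    rw [map_inv, Commute.inv_inv_iff, hin a haL] at hcomm_a
    exact not_commute_raagGen_conj Γ hne hadj hcomm_a
  · intro haL
    exact MulAut.commute_conj_of_map_eq (by rw [map_inv, hout a haL])

/-- Corollary 3.5. The inner automorphism `ι_a : w ↦ a⁻¹wa` commutes with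
the partial conjugation `π_{b,L}` if and only if `a ∉ L`. -/
theorem inner_commute_pc_iff {V : Type} [Fintype V] (Γ : SimpleGraph V)
    (hZ : (Zset Γ).Nonempty) (a : V) (ha : a ∉ Zset Γ) (b : V) (L : Set V)
    (ψ : MulAut (RAAG Γ)) (hψ : IsPartialConj Γ b L ψ) :
    Commute (MulAut.conj (raagGen Γ a)⁻¹) ψ ↔ a ∉ L :=
  inner_commute_pc_iff_general Γ a b L ψ hψ
end

section
/- Let Γ be a finite simplicial graph with vertex set V and let Z = {v ∈ V : st(v) = V}. Let U₁, …, U_p be the maximal subsets of V whose spanned full subgraphs are disconnected or non-dominating (maximal under inclusion among such subsets). Then V ∖ Z = U₁ ∪ ⋯ ∪ U_p, and consequently |V| − |Z| = 1 + Σ_{∅ ≠ I ⊆ {1,…,p}} (−1)^{|I|+1} (|⋂_{i∈I} U_i| − 1). -/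
/-!
A vertex of `Z` is adjacent to every other vertex, so any vertex set containing it spans a
connected dominating subgraph; hence every `Uᵢ` avoids `Z`. Conversely, if `v ∉ Z` then some
vertex lies outside `st(v)`, so `{v}` is non-dominating and, `V` being finite, lies in a maximal
such set, i.e. in some `Uᵢ`. The counting formula is inclusion–exclusion for `|U₁ ∪ ⋯ ∪ Uₚ|`,
where the `−1` terms contribute `−1` in total because `p ≥ 1` (the empty set is disconnected).
-/

open SimpleGraph

open Finset in
theorem Finset.sum_filter_nonempty_neg_one_pow_card_succ {ι : Type*} {s : Finset ι}
    (hs : s.Nonempty) : ∑ I ∈ s.powerset.filter (·.Nonempty), (-1 : ℤ) ^ (#I + 1) = 1 := by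
  have hsplit := sum_filter_add_sum_filter_not s.powerset (·.Nonempty) fun I => (-1 : ℤ) ^ #I
  have hempty : s.powerset.filter (¬·.Nonempty) = {∅} := by
    ext I
    simp +contextual [not_nonempty_iff_eq_empty]
  rw [sum_powerset_neg_one_pow_card_of_nonempty hs, hempty, sum_singleton, card_empty] at hsplit
  simp only [pow_succ, mul_neg_one, sum_neg_distrib]
  linarith

theorem Set.ncard_iUnion_eq_inclusion_exclusion {α ι : Type*} [Finite α] [Fintype ι]
    (U : ι → Set α) :
    ((⋃ i, U i).ncard : ℤ) = ∑ I ∈ Finset.univ.powerset.filter (·.Nonempty),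
      (-1 : ℤ) ^ (I.card + 1) * ((⋂ i ∈ I, U i).ncard : ℤ) := by
  classical
  have := Fintype.ofFinite α
  have hunion : (⋃ i, U i) = ↑(Finset.univ.biUnion fun i => (U i).toFinset) := by
    ext; simp
  rw [hunion, Set.ncard_coe_finset, Finset.inclusion_exclusion_card_biUnion,
    ← Finset.sum_coe_sort (Finset.univ.powerset.filter (·.Nonempty))
      fun I => (-1 : ℤ) ^ (I.card + 1) * ((⋂ i ∈ I, U i).ncard : ℤ)]
  refine Finset.sum_congr rfl fun I _ => ?_
  have hinter : ((I.1.inf' (Finset.mem_filter.1 I.2).2 fun i => (U i).toFinset : Finset α) :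
      Set α) = ⋂ i ∈ I.1, U i := by
    ext; simp [Finset.mem_inf']
  rw [← hinter, Set.ncard_coe_finset]

section Missing

variable {V : Type} (Γ : SimpleGraph V)

lemma adj_of_mem_Zset {v w : V} (hv : v ∈ Zset Γ) (hwv : w ≠ v) : Γ.Adj w v := by
  have hw : w ∈ Gstar Γ v := (hv : Gstar Γ v = Set.univ) ▸ Set.mem_univ w
  rcases hw with rfl | hadj
  · exact absurd rfl hwv
  · exact hadj.symm

lemma not_missing_of_mem_Zset {U : Set V} {v : V} (hvU : v ∈ U) (hv : v ∈ Zset Γ) :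
    ¬Missing Γ U := by
  have hdom : Dominating Γ U := by
    intro w
    by_cases hwv : w = v
    · exact Or.inl (hwv ▸ hvU)
    · exact Or.inr ⟨v, hvU, adj_of_mem_Zset Γ hv hwv⟩
  have hreach : ∀ x : U, (Γ.induce U).Reachable x ⟨v, hvU⟩ := by
    intro x
    by_cases hxv : (x : V) = v
    · rw [(Subtype.ext hxv : x = ⟨v, hvU⟩)]
    · exact Adj.reachable (G := Γ.induce U) (adj_of_mem_Zset Γ hv hxv)
  have hconn : (Γ.induce U).Connected :=
    { preconnected := fun x y => (hreach x).trans (hreach y).symm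
      nonempty := ⟨⟨v, hvU⟩⟩ }
  rintro (h | h)
  exacts [h hconn, h hdom]

lemma missing_singleton_of_notMem_Zset {v : V} (hv : v ∉ Zset Γ) : Missing Γ {v} := by
  refine Or.inr fun hdom => hv (Set.eq_univ_of_forall fun w => ?_)
  rcases hdom w with rfl | ⟨_, rfl, hadj⟩
  exacts [Set.mem_insert _ _, Set.mem_insert_of_mem _ hadj.symm]

lemma missing_empty : Missing Γ ∅ :=
  Or.inl fun h => h.nonempty.elim fun x => x.2

lemma exists_subset_of_missing [Finite V] {ι : Type*} {U : ι → Set V}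
    (hall : ∀ W, Missing Γ W → (∀ W', Missing Γ W' → W ⊆ W' → W' = W) → ∃ i, W = U i)
    {W : Set V} (hW : Missing Γ W) : ∃ i, W ⊆ U i := by
  obtain ⟨M, hWM, hM⟩ := Finite.exists_le_maximal hW
  obtain ⟨i, rfl⟩ := hall M hM.prop fun W' hW' hMW' => (hM.eq_of_subset hW' hMW').symm
  exact ⟨i, hWM⟩

lemma univ_diff_Zset_eq_iUnion {ι : Type*} {U : ι → Set V} (hbad : ∀ i, Missing Γ (U i))
    (hcover : ∀ W, Missing Γ W → ∃ i, W ⊆ U i) : Set.univ \ Zset Γ = ⋃ i, U i := by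
  ext v
  simp only [Set.mem_sdiff, Set.mem_univ, true_and, Set.mem_iUnion]
  constructor
  · intro hv
    obtain ⟨i, hi⟩ := hcover _ (missing_singleton_of_notMem_Zset Γ hv)
    exact ⟨i, hi rfl⟩
  · rintro ⟨i, hi⟩ hv
    exact not_missing_of_mem_Zset Γ hi hv (hbad i)

end Missing

theorem counting_dimensions_general {V : Type} [Fintype V] (Γ : SimpleGraph V)
    (p : ℕ) (U : Fin p → Set V)
    (hbad : ∀ i, Missing Γ (U i))
    (hall : ∀ W, Missing Γ W → (∀ W', Missing Γ W' → W ⊆ W' → W' = W) → ∃ i, W = U i) :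
    (Set.univ \ Zset Γ = ⋃ i, U i) ∧
    ((Fintype.card V : ℤ) - ((Zset Γ).ncard : ℤ) =
      1 + ∑ I ∈ Finset.univ.powerset.filter (fun I : Finset (Fin p) => I.Nonempty),
        (-1 : ℤ) ^ (I.card + 1) * (((⋂ i ∈ I, U i).ncard : ℤ) - 1)) := by
  have hcover : ∀ W, Missing Γ W → ∃ i, W ⊆ U i := fun _ => exists_subset_of_missing Γ hall
  have hunion := univ_diff_Zset_eq_iUnion Γ hbad hcover
  obtain ⟨i₀, -⟩ := hcover ∅ (missing_empty Γ)
  have hcard : (Fintype.card V : ℤ) - (Zset Γ).ncard = (⋃ i, U i).ncard := by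
    rw [← hunion, ← Set.compl_eq_univ_sdiff]
    have := Set.ncard_add_ncard_compl (Zset Γ)
    rw [Nat.card_eq_fintype_card] at this
    omega
  refine ⟨hunion, ?_⟩
  rw [hcard, Set.ncard_iUnion_eq_inclusion_exclusion]
  simp only [mul_sub, mul_one, Finset.sum_sub_distrib]
  rw [Finset.sum_filter_nonempty_neg_one_pow_card_succ ⟨i₀, Finset.mem_univ _⟩]
  ring

/-- Lemma 5.1. If `U₁, …, U_p` are the maximal vertex subsets spanning
disconnected or non-dominating full subgraphs, then `V ∖ Z = U₁ ∪ ⋯ ∪ U_p` and the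
inclusion–exclusion identity for `|V| − |Z|` holds. -/
theorem counting_dimensions {V : Type} [Fintype V] (Γ : SimpleGraph V)
    (p : ℕ) (U : Fin p → Set V) (hinj : Function.Injective U)
    (hbad : ∀ i, Missing Γ (U i))
    (hmax : ∀ i, ∀ W, Missing Γ W → U i ⊆ W → W = U i)
    (hall : ∀ W, Missing Γ W → (∀ W', Missing Γ W' → W ⊆ W' → W' = W) → ∃ i, W = U i) :
    (Set.univ \ Zset Γ = ⋃ i, U i) ∧
    ((Fintype.card V : ℤ) - ((Zset Γ).ncard : ℤ) =
      1 + ∑ I ∈ Finset.univ.powerset.filter (fun I : Finset (Fin p) => I.Nonempty),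
        (-1 : ℤ) ^ (I.card + 1) * (((⋂ i ∈ I, U i).ncard : ℤ) - 1)) :=
  counting_dimensions_general Γ p U hbad hall
end

section
/- Let Γ be a finite simplicial graph with vertex set V, and let U, W ⊆ V be subsets such that the full subgraph spanned by U is disconnected or non-dominating and the full subgraph spanned by W is disconnected or non-dominating. If U ∩ W is non-empty, then the full subgraph spanned by U ∩ W is disconnected or non-dominating. -/
open SimpleGraph

/-! Spanning a connected dominating subgraph passes from a set `S` to every superset `U`:
domination trivially, and connectedness because every vertex of `U` lies in `S` or is adjacent
to it. Contrapositively, being missing passes to subsets; the empty set is missing because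
Mathlib's connected graphs are nonempty. -/

variable {V : Type} {Γ : SimpleGraph V} {S U : Set V}

theorem Dominating.mono (hS : Dominating Γ S) (hSU : S ⊆ U) : Dominating Γ U := fun v =>
  (hS v).imp (@hSU v) fun ⟨s, hs, hadj⟩ => ⟨s, hSU hs, hadj⟩

theorem SimpleGraph.Connected.induce_of_forall_mem_or_adj (hS : (Γ.induce S).Connected)
    (hSU : S ⊆ U) (hU : ∀ u ∈ U, u ∈ S ∨ ∃ s ∈ S, Γ.Adj u s) : (Γ.induce U).Connected := by
  obtain ⟨⟨s₀, hs₀⟩⟩ := hS.nonempty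
  rw [connected_iff_exists_forall_reachable]
  refine ⟨⟨s₀, hSU hs₀⟩, fun ⟨u, hu⟩ => ?_⟩
  obtain ⟨s, hs, hsu⟩ : ∃ (s : V) (hs : s ∈ S), (Γ.induce U).Reachable ⟨s, hSU hs⟩ ⟨u, hu⟩ := by
    rcases hU u hu with hu' | ⟨s, hs, hadj⟩
    · exact ⟨u, hu', .rfl⟩
    · exact ⟨s, hs, Adj.reachable (G := Γ.induce U) hadj.symm⟩
  exact ((hS ⟨s₀, hs₀⟩ ⟨s, hs⟩).map (induceHomOfLE Γ hSU).toHom).trans hsu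

theorem Missing.anti (hU : Missing Γ U) (hSU : S ⊆ U) : Missing Γ S := by
  by_contra hS
  simp only [Missing, not_or, not_not] at hS
  obtain ⟨hconn, hdom⟩ := hS
  exact hU.elim (· (hconn.induce_of_forall_mem_or_adj hSU fun u _ => hdom u)) (· (hdom.mono hSU))

theorem missing_inter_general {V : Type} (Γ : SimpleGraph V)
    (U W : Set V) (hU : Missing Γ U) :
    Missing Γ (U ∩ W) :=
  hU.anti Set.inter_subset_left

/-- If `U` and `W` each span a disconnected or non-dominating full
subgraph and `U ∩ W ≠ ∅`, then `U ∩ W` spans a disconnected or non-dominating full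
subgraph. -/
theorem missing_inter {V : Type} [Fintype V] (Γ : SimpleGraph V)
    (U W : Set V) (hU : Missing Γ U) (hW : Missing Γ W) (hUW : (U ∩ W).Nonempty) :
    Missing Γ (U ∩ W) :=
  missing_inter_general Γ U W hU
end
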